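/- arXiv:2203.02638 — 2 statements merged into one kernel-verified Lean document; each statement's English description precedes it below -/
import Mathlib

section
/- Let 𝒜 ⊆ ℝᵐ be a nonempty set of actions contained in the closed ball of radius a_max centered at the origin, let A, Â be n×n real matrices, B, B̂ be n×m real matrices, and fix a state s ∈ ℝⁿ and a target point y ∈ ℝⁿ. Suppose â ∈ 𝒜 minimizes the model-predicted tracking cost a ↦ ‖Â s + B̂ a − y‖₂ over 𝒜. Then for every comparator action a⋆ ∈ 𝒜, the true tracking cost of the model-greedy action satisfies ‖A s + B â − y‖₂ ≤ ‖A s + B a⋆ − y‖₂ + 2·(σ₁(A − Â)·‖s‖₂ + σ₁(B − B̂)·a_max). -/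
/-- The largest singular value of a real matrix, i.e. the ℓ²-operator norm of the
induced linear map between Euclidean spaces. -/
noncomputable def sigma1 {n m : ℕ} (M : Matrix (Fin n) (Fin m) ℝ) : ℝ :=
  ‖LinearMap.toContinuousLinearMap (Matrix.toEuclideanLin M)‖

lemma sigma1_bound {n m : ℕ} (M : Matrix (Fin n) (Fin m) ℝ)
    (v : EuclideanSpace ℝ (Fin m)) :
    ‖Matrix.toEuclideanLin M v‖ ≤ sigma1 M * ‖v‖ :=
  (LinearMap.toContinuousLinearMap (Matrix.toEuclideanLin M)).le_opNorm v

theorem greedy_with_approx_dynamics_one_step {n m : ℕ}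
    (𝒜 : Set (EuclideanSpace ℝ (Fin m))) (h𝒜 : 𝒜.Nonempty)
    (a_max : ℝ) (h𝒜bdd : 𝒜 ⊆ Metric.closedBall 0 a_max)
    (A Ahat : Matrix (Fin n) (Fin n) ℝ) (B Bhat : Matrix (Fin n) (Fin m) ℝ)
    (s : EuclideanSpace ℝ (Fin n)) (y : EuclideanSpace ℝ (Fin n))
    (ahat : EuclideanSpace ℝ (Fin m)) (hahat : ahat ∈ 𝒜)
    (hmin : ∀ a ∈ 𝒜,
      ‖Matrix.toEuclideanLin Ahat s + Matrix.toEuclideanLin Bhat ahat - y‖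
        ≤ ‖Matrix.toEuclideanLin Ahat s + Matrix.toEuclideanLin Bhat a - y‖) :
    ∀ astar ∈ 𝒜,
      ‖Matrix.toEuclideanLin A s + Matrix.toEuclideanLin B ahat - y‖
        ≤ ‖Matrix.toEuclideanLin A s + Matrix.toEuclideanLin B astar - y‖
          + 2 * (sigma1 (A - Ahat) * ‖s‖ + sigma1 (B - Bhat) * a_max) := by
  intro astar hastar
  set ε := sigma1 (A - Ahat) * ‖s‖ + sigma1 (B - Bhat) * a_max with hε
  have err : ∀ a ∈ 𝒜,
      ‖(Matrix.toEuclideanLin A s + Matrix.toEuclideanLin B a - y)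
        - (Matrix.toEuclideanLin Ahat s + Matrix.toEuclideanLin Bhat a - y)‖ ≤ ε := by
    intro a ha
    have h1 : (Matrix.toEuclideanLin A s + Matrix.toEuclideanLin B a - y)
        - (Matrix.toEuclideanLin Ahat s + Matrix.toEuclideanLin Bhat a - y)
        = Matrix.toEuclideanLin (A - Ahat) s + Matrix.toEuclideanLin (B - Bhat) a := by
      simp only [map_sub, LinearMap.sub_apply]
      abel
    rw [h1]
    have ha' : ‖a‖ ≤ a_max := by
      have := h𝒜bdd ha
      simpa [Metric.mem_closedBall, dist_zero_right] using this
    calc ‖Matrix.toEuclideanLin (A - Ahat) s + Matrix.toEuclideanLin (B - Bhat) a‖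
        ≤ ‖Matrix.toEuclideanLin (A - Ahat) s‖ + ‖Matrix.toEuclideanLin (B - Bhat) a‖ :=
          norm_add_le _ _
      _ ≤ sigma1 (A - Ahat) * ‖s‖ + sigma1 (B - Bhat) * a_max := by
          gcongr ?_ + ?_
          · exact sigma1_bound _ _
          · exact (sigma1_bound _ _).trans (by
              have : (0 : ℝ) ≤ sigma1 (B - Bhat) := norm_nonneg _
              nlinarith)
  have h1 := err ahat hahat
  have h2 := err astar hastar
  have h3 := hmin astar hastar
  have t1 : ‖Matrix.toEuclideanLin A s + Matrix.toEuclideanLin B ahat - y‖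
      ≤ ‖Matrix.toEuclideanLin Ahat s + Matrix.toEuclideanLin Bhat ahat - y‖ + ε := by
    have := norm_sub_norm_le (Matrix.toEuclideanLin A s + Matrix.toEuclideanLin B ahat - y)
      (Matrix.toEuclideanLin Ahat s + Matrix.toEuclideanLin Bhat ahat - y)
    linarith [this.trans h1]
  have t2 : ‖Matrix.toEuclideanLin Ahat s + Matrix.toEuclideanLin Bhat astar - y‖
      ≤ ‖Matrix.toEuclideanLin A s + Matrix.toEuclideanLin B astar - y‖ + ε := by
    have := norm_sub_norm_le (Matrix.toEuclideanLin Ahat s + Matrix.toEuclideanLin Bhat astar - y)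
      (Matrix.toEuclideanLin A s + Matrix.toEuclideanLin B astar - y)
    have h2' : ‖(Matrix.toEuclideanLin Ahat s + Matrix.toEuclideanLin Bhat astar - y)
        - (Matrix.toEuclideanLin A s + Matrix.toEuclideanLin B astar - y)‖ ≤ ε := by
      rw [norm_sub_rev]; exact h2
    linarith [this.trans h2']
  linarith
end

section
/- Let A, Â be n×n real matrices and B, B̂ be n×m real matrices, and let (s_t)_{t≥1} and (ŝ_t)_{t≥1} be the state trajectories generated from the same initial state s₁ = ŝ₁ ∈ ℝⁿ and the same action sequence (a_t)_{t≥1} in ℝᵐ by the true and approximate linear dynamics, i.e., s_{t+1} = A s_t + B a_t and ŝ_{t+1} = Â ŝ_t + B̂ a_t for all t ≥ 1. Then for every t ≥ 1, ‖s_{t+1} − ŝ_{t+1}‖₂ ≤ ∑_{k=1}^{t} σ₁(Â)^{t−k}·(σ₁(A − Â)·‖s_k‖₂ + σ₁(B − B̂)·‖a_k‖₂). -/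
lemma sigma1_nonneg {n m : ℕ} (M : Matrix (Fin n) (Fin m) ℝ) : 0 ≤ sigma1 M :=
  norm_nonneg _

lemma norm_toEuclideanLin_le {n m : ℕ} (M : Matrix (Fin n) (Fin m) ℝ)
    (x : EuclideanSpace ℝ (Fin m)) :
    ‖Matrix.toEuclideanLin M x‖ ≤ sigma1 M * ‖x‖ :=
  (LinearMap.toContinuousLinearMap (Matrix.toEuclideanLin M)).le_opNorm x

theorem rollout_error_bound {n m : ℕ}
    (A Ahat : Matrix (Fin n) (Fin n) ℝ) (B Bhat : Matrix (Fin n) (Fin m) ℝ)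
    (s shat : ℕ → EuclideanSpace ℝ (Fin n)) (a : ℕ → EuclideanSpace ℝ (Fin m))
    (hinit : s 1 = shat 1)
    (hs : ∀ t ≥ 1, s (t + 1) = Matrix.toEuclideanLin A (s t) + Matrix.toEuclideanLin B (a t))
    (hshat : ∀ t ≥ 1,
      shat (t + 1) = Matrix.toEuclideanLin Ahat (shat t) + Matrix.toEuclideanLin Bhat (a t)) :
    ∀ t ≥ 1,
      ‖s (t + 1) - shat (t + 1)‖
        ≤ ∑ k ∈ Finset.Icc 1 t,
            sigma1 Ahat ^ (t - k) * (sigma1 (A - Ahat) * ‖s k‖ + sigma1 (B - Bhat) * ‖a k‖) := by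
  have key : ∀ t ≥ 1, ‖s (t + 1) - shat (t + 1)‖
      ≤ sigma1 Ahat * ‖s t - shat t‖ + (sigma1 (A - Ahat) * ‖s t‖ + sigma1 (B - Bhat) * ‖a t‖) := by
    intro t ht
    have hdiff : s (t + 1) - shat (t + 1)
        = Matrix.toEuclideanLin Ahat (s t - shat t)
          + (Matrix.toEuclideanLin (A - Ahat) (s t) + Matrix.toEuclideanLin (B - Bhat) (a t)) := by
      rw [hs t ht, hshat t ht, map_sub, map_sub, map_sub]
      simp only [LinearMap.sub_apply]
      abel
    rw [hdiff]
    calc ‖Matrix.toEuclideanLin Ahat (s t - shat t)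
          + (Matrix.toEuclideanLin (A - Ahat) (s t) + Matrix.toEuclideanLin (B - Bhat) (a t))‖
        ≤ ‖Matrix.toEuclideanLin Ahat (s t - shat t)‖
          + (‖Matrix.toEuclideanLin (A - Ahat) (s t)‖ + ‖Matrix.toEuclideanLin (B - Bhat) (a t)‖) := by
          exact le_trans (norm_add_le _ _) (by gcongr; exact norm_add_le _ _)
      _ ≤ sigma1 Ahat * ‖s t - shat t‖
          + (sigma1 (A - Ahat) * ‖s t‖ + sigma1 (B - Bhat) * ‖a t‖) := by
          gcongr <;> apply norm_toEuclideanLin_le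
  intro t ht
  induction t with
  | zero => omega
  | succ t ih =>
    rcases Nat.eq_zero_or_pos t with h0 | hp
    · subst h0
      have h := key 1 le_rfl
      rw [sub_eq_zero.mpr hinit, norm_zero, mul_zero, zero_add] at h
      simpa using h
    · have ih' := ih hp
      have h := key (t + 1) (by omega)
      have hsum : ∑ k ∈ Finset.Icc 1 (t + 1),
            sigma1 Ahat ^ (t + 1 - k) * (sigma1 (A - Ahat) * ‖s k‖ + sigma1 (B - Bhat) * ‖a k‖)
          = sigma1 Ahat * ∑ k ∈ Finset.Icc 1 t,
              sigma1 Ahat ^ (t - k) * (sigma1 (A - Ahat) * ‖s k‖ + sigma1 (B - Bhat) * ‖a k‖)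
            + (sigma1 (A - Ahat) * ‖s (t + 1)‖ + sigma1 (B - Bhat) * ‖a (t + 1)‖) := by
        rw [Finset.sum_Icc_succ_top (by omega : 1 ≤ t + 1), Finset.mul_sum]
        congr 1
        · apply Finset.sum_congr rfl
          intro k hk
          rw [Finset.mem_Icc] at hk
          have : t + 1 - k = (t - k) + 1 := by omega
          rw [this, pow_succ]
          ring
        · simp
      rw [hsum]
      calc ‖s (t + 1 + 1) - shat (t + 1 + 1)‖
          ≤ sigma1 Ahat * ‖s (t + 1) - shat (t + 1)‖
            + (sigma1 (A - Ahat) * ‖s (t + 1)‖ + sigma1 (B - Bhat) * ‖a (t + 1)‖) := h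
        _ ≤ _ := by
            gcongr
            exact sigma1_nonneg _
end
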